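/- Let (A_τ, B_τ, C_τ) for τ = 1,...,T be finitely-valued random variables such that, conditioned on the sequence A^T = (A_1,...,A_T), the pairs (B_τ, C_τ) are mutually independent across τ with fixed memoryless conditional laws p(B_τ | A_τ) = p_{B|A} and p(C_τ | B_τ) = p_{C|B} (so that A^T → B^T → C^T is a Markov chain and the channel is memoryless and physically degraded). Then H(B^T) − H(C^T) ≤ ∑_{τ=1}^{T} ( H(B_τ) − H(C_τ) ), where B^T = (B_1,...,B_T) and C^T = (C_1,...,C_T), regardless of the (possibly non-i.i.d.) joint distribution of A^T. -/

import Mathlib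

open scoped BigOperators Classical

noncomputable section

/-- Probability of an event under a pmf `p` on a finite sample space. -/
def pr {Ω : Type*} [Fintype Ω] (p : Ω → ℝ) (E : Ω → Prop) : ℝ :=
  ∑ ω, if E ω then p ω else 0

/-- `p` is a probability mass function. -/
def IsPMF {Ω : Type*} [Fintype Ω] (p : Ω → ℝ) : Prop :=
  (∀ ω, 0 ≤ p ω) ∧ ∑ ω, p ω = 1

/-- Shannon entropy of a finitely-valued random variable `X` w.r.t. the pmf `p`. -/
def ent {Ω α : Type*} [Fintype Ω] [Fintype α] (p : Ω → ℝ) (X : Ω → α) : ℝ :=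
  ∑ a, Real.negMulLog (pr p (fun ω => X ω = a))

/-- Conditional Shannon entropy `H(X | Y) = H(X, Y) - H(Y)`. -/
def condEnt {Ω α β : Type*} [Fintype Ω] [Fintype α] [Fintype β]
    (p : Ω → ℝ) (X : Ω → α) (Y : Ω → β) : ℝ :=
  ent p (fun ω => (X ω, Y ω)) - ent p Y

/-- Mutual information `I(X; Y) = H(X) + H(Y) - H(X, Y)`. -/
def mutInfo {Ω α β : Type*} [Fintype Ω] [Fintype α] [Fintype β]
    (p : Ω → ℝ) (X : Ω → α) (Y : Ω → β) : ℝ :=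
  ent p X + ent p Y - ent p (fun ω => (X ω, Y ω))

/-- Conditional mutual information `I(X; Y | Z) = H(X|Z) + H(Y|Z) - H(X,Y|Z)`. -/
def condMutInfo {Ω α β γ : Type*} [Fintype Ω] [Fintype α] [Fintype β] [Fintype γ]
    (p : Ω → ℝ) (X : Ω → α) (Y : Ω → β) (Z : Ω → γ) : ℝ :=
  condEnt p X Z + condEnt p Y Z - condEnt p (fun ω => (X ω, Y ω)) Z

/-- `A → B → C` is a Markov chain: `A` and `C` are conditionally independent given `B`. -/
def MarkovChain {Ω α β γ : Type*} [Fintype Ω]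
    (p : Ω → ℝ) (A : Ω → α) (B : Ω → β) (C : Ω → γ) : Prop :=
  ∀ a b c,
    pr p (fun ω => A ω = a ∧ B ω = b ∧ C ω = c) * pr p (fun ω => B ω = b)
      = pr p (fun ω => A ω = a ∧ B ω = b) * pr p (fun ω => B ω = b ∧ C ω = c)

/-- Independence of two finitely-valued random variables. -/
def IndepRV {Ω α β : Type*} [Fintype Ω] (p : Ω → ℝ) (X : Ω → α) (Y : Ω → β) : Prop :=
  ∀ a b, pr p (fun ω => X ω = a ∧ Y ω = b)
    = pr p (fun ω => X ω = a) * pr p (fun ω => Y ω = b)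

end

/-!
Since `H(B, C) = H(B) + H(C | B) = H(C) + H(B | C)`, we have
`H(Bᵀ) - H(Cᵀ) = H(Bᵀ | Cᵀ) - H(Cᵀ | Bᵀ)`, and likewise for each letter. Because the channel
`B → C` is memoryless, `H(Cᵀ | Bᵀ) = ∑ τ, H(C_τ | B_τ)` exactly, while
`H(Bᵀ | Cᵀ) ≤ ∑ τ, H(B_τ | C_τ)` holds for every joint law: this is Gibbs' inequality against the
comparison law `P(Cᵀ = c) * ∏ τ, P(B_τ = b τ | C_τ = c τ)`. The input `Aᵀ` only enters through
the law of `Bᵀ`.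
-/

open Finset Real

section Entropy

variable {Ω α β γ ι : Type*} [Fintype Ω] {p : Ω → ℝ}

lemma pr_congr {E F : Ω → Prop} (h : ∀ ω, E ω ↔ F ω) : pr p E = pr p F :=
  congrArg (pr p) (funext fun ω => propext (h ω))

lemma pr_nonneg (hp : ∀ ω, 0 ≤ p ω) (E : Ω → Prop) : 0 ≤ pr p E :=
  sum_nonneg fun ω _ => by split_ifs <;> simp [hp ω]

lemma le_pr (hp : ∀ ω, 0 ≤ p ω) {E : Ω → Prop} {ω : Ω} (h : E ω) : p ω ≤ pr p E :=
  calc p ω = if E ω then p ω else 0 := (if_pos h).symm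
    _ ≤ pr p E := single_le_sum (f := fun ω => if E ω then p ω else 0)
        (fun ω _ => by split_ifs <;> simp [hp ω]) (mem_univ ω)

lemma sum_pr_mul [Fintype α] (X : Ω → α) (g : α → ℝ) :
    ∑ x, pr p (fun ω => X ω = x) * g x = ∑ ω, p ω * g (X ω) := by
  simp only [pr, sum_mul, ite_mul, zero_mul]
  rw [sum_comm]
  simp

lemma sum_pr [Fintype α] (X : Ω → α) : ∑ x, pr p (fun ω => X ω = x) = ∑ ω, p ω := by
  simpa using sum_pr_mul (p := p) X fun _ => 1

lemma sum_pr_and_eq [Fintype α] (E : Ω → Prop) (X : Ω → α) :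
    ∑ x, pr p (fun ω => E ω ∧ X ω = x) = pr p E := by
  unfold pr
  rw [sum_comm]
  refine sum_congr rfl fun ω _ => ?_
  by_cases h : E ω <;> simp [h]

lemma sum_pr_eq_and [Fintype α] (X : Ω → α) (E : Ω → Prop) :
    ∑ x, pr p (fun ω => X ω = x ∧ E ω) = pr p E := by
  simpa only [and_comm] using sum_pr_and_eq (p := p) E X

lemma pr_eq_sum_ite [Fintype α] (X : Ω → α) (E : α → Prop) [DecidablePred E] :
    pr p (fun ω => E (X ω)) = ∑ x, if E x then pr p (fun ω => X ω = x) else 0 := by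
  have := sum_pr_mul (p := p) X fun x => if E x then 1 else 0
  simp only [mul_ite, mul_one, mul_zero] at this
  rw [this, pr]
  congr! 2

lemma pr_eq_sum_sum_ite [Fintype α] [Fintype β] (X : Ω → α) (Y : Ω → β) (E : α → β → Prop)
    [∀ x y, Decidable (E x y)] :
    pr p (fun ω => E (X ω) (Y ω))
      = ∑ x, ∑ y, if E x y then pr p (fun ω => X ω = x ∧ Y ω = y) else 0 := by
  rw [pr_eq_sum_ite (fun ω => (X ω, Y ω)) fun v => E v.1 v.2, Fintype.sum_prod_type]
  simp only [Prod.mk.injEq]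

lemma ent_comp_equiv [Fintype α] [Fintype β] (X : Ω → α) (e : α ≃ β) :
    ent p (fun ω => e (X ω)) = ent p X := by
  unfold ent
  rw [← e.sum_comp]
  simp only [e.apply_eq_iff_eq]

lemma ent_sub_ent_eq_condEnt_sub_condEnt [Fintype α] [Fintype β] (X : Ω → α) (Y : Ω → β) :
    ent p X - ent p Y = condEnt p X Y - condEnt p Y X := by
  have := ent_comp_equiv (p := p) (fun ω => (X ω, Y ω)) (Equiv.prodComm α β)
  simp only [Equiv.prodComm_apply, Prod.swap_prod_mk] at this
  simp only [condEnt, this]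
  ring

lemma sum_mul_neg_log_pr_eq_ent [Fintype α] (X : Ω → α) :
    ∑ ω, p ω * -log (pr p fun ω' => X ω' = X ω) = ent p X := by
  rw [← sum_pr_mul X fun x => -log (pr p fun ω' => X ω' = x)]
  simp [ent, negMulLog]

lemma sum_negMulLog_le_sum_mul_neg_log [Fintype α] {P Q : α → ℝ} (hP : ∀ a, 0 ≤ P a)
    (hQ : ∀ a, 0 ≤ Q a) (hPQ : ∀ a, 0 < P a → 0 < Q a) (hsum : ∑ a, Q a ≤ ∑ a, P a) :
    ∑ a, negMulLog (P a) ≤ ∑ a, P a * -log (Q a) := by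
  have key : ∀ a, negMulLog (P a) - P a * -log (Q a) ≤ Q a - P a := by
    intro a
    rcases (hP a).eq_or_lt with h | h
    · simp [← h, hQ a]
    · have hlog := mul_le_mul_of_nonneg_left (log_le_sub_one_of_pos (div_pos (hPQ a h) h)) h.le
      rw [log_div (hPQ a h).ne' h.ne', mul_sub_one, mul_div_cancel₀ _ h.ne'] at hlog
      rw [negMulLog]
      linarith
  have := sum_le_sum fun a (_ : a ∈ univ) => key a
  simp only [sum_sub_distrib] at this
  linarith

lemma ent_le_sum_mul_neg_log [Fintype α] (hp : ∀ ω, 0 ≤ p ω) (X : Ω → α) {Q : α → ℝ}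
    (hQ0 : ∀ a, 0 ≤ Q a) (hQ1 : ∑ a, Q a ≤ ∑ ω, p ω) (hQ : ∀ ω, 0 < p ω → 0 < Q (X ω)) :
    ent p X ≤ ∑ ω, p ω * -log (Q (X ω)) := by
  rw [← sum_pr_mul X fun a => -log (Q a)]
  refine sum_negMulLog_le_sum_mul_neg_log (fun a => pr_nonneg hp _) hQ0 (fun a ha => ?_)
    (by rwa [sum_pr])
  obtain ⟨ω, -, hω⟩ := exists_ne_zero_of_sum_ne_zero ha.ne'
  split_ifs at hω with h
  · exact h ▸ hQ ω ((hp ω).lt_of_ne' hω)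
  · exact absurd rfl hω

end Entropy

section Subadditivity

variable {Ω β γ ι : Type*} [Fintype Ω] [Fintype ι]

/-- The law of `(Xᵀ, Yᵀ)` that keeps the law of `Yᵀ` and draws each `X i` from its conditional law
given `Y i`, independently across letters; where `P(Y i = y i) = 0` the ratio is the junk value `0`,
so it is only a sub-probability law. -/
noncomputable def condProductLaw (p : Ω → ℝ) (X : ι → Ω → β) (Y : ι → Ω → γ)
    (v : (ι → β) × (ι → γ)) : ℝ :=
  pr p (fun ω => (fun i => Y i ω) = v.2) *
    ∏ i, pr p (fun ω => (X i ω, Y i ω) = (v.1 i, v.2 i)) / pr p (fun ω => Y i ω = v.2 i)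

variable {p : Ω → ℝ} (X : ι → Ω → β) (Y : ι → Ω → γ)

lemma condProductLaw_nonneg (hp : ∀ ω, 0 ≤ p ω) (v : (ι → β) × (ι → γ)) :
    0 ≤ condProductLaw p X Y v :=
  mul_nonneg (pr_nonneg hp _)
    (prod_nonneg fun _ _ => div_nonneg (pr_nonneg hp _) (pr_nonneg hp _))

lemma sum_condProductLaw_le [Fintype β] [Fintype γ] [DecidableEq ι] (hp : ∀ ω, 0 ≤ p ω) :
    ∑ v, condProductLaw p X Y v ≤ ∑ ω, p ω := by
  rw [← sum_pr (fun ω i => Y i ω), Fintype.sum_prod_type_right]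
  refine sum_le_sum fun y _ => ?_
  simp only [condProductLaw]
  rw [← mul_sum, ← Fintype.prod_sum fun i b =>
    pr p (fun ω => (X i ω, Y i ω) = (b, y i)) / pr p (fun ω => Y i ω = y i)]
  refine mul_le_of_le_one_right (pr_nonneg hp _) (prod_le_one ?_ fun i _ => ?_)
  · exact fun i _ => sum_nonneg fun b _ => div_nonneg (pr_nonneg hp _) (pr_nonneg hp _)
  · simp only [← sum_div, Prod.mk.injEq, sum_pr_eq_and]
    exact div_self_le_one _

lemma condProductLaw_pos (hp : ∀ ω, 0 ≤ p ω) {ω : Ω} (hω : 0 < p ω) :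
    0 < condProductLaw p X Y ((fun i => X i ω), fun i => Y i ω) :=
  mul_pos (hω.trans_le (le_pr hp rfl))
    (prod_pos fun _ _ => div_pos (hω.trans_le (le_pr hp rfl)) (hω.trans_le (le_pr hp rfl)))

lemma mul_neg_log_condProductLaw (hp : ∀ ω, 0 ≤ p ω) (ω : Ω) :
    p ω * -log (condProductLaw p X Y ((fun i => X i ω), fun i => Y i ω))
      = p ω * -log (pr p fun ω' => (fun i => Y i ω') = fun i => Y i ω)
        + ∑ i, (p ω * -log (pr p fun ω' => (X i ω', Y i ω') = (X i ω, Y i ω))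
          - p ω * -log (pr p fun ω' => Y i ω' = Y i ω)) := by
  rcases (hp ω).eq_or_lt with h | h
  · simp [← h]
  have hpos : ∀ E : Ω → Prop, E ω → pr p E ≠ 0 := fun _ hE => (h.trans_le (le_pr hp hE)).ne'
  have hXY := fun i => hpos (fun ω' => (X i ω', Y i ω') = (X i ω, Y i ω)) rfl
  have hY := fun i => hpos (fun ω' => Y i ω' = Y i ω) rfl
  rw [condProductLaw, log_mul (hpos (fun ω' => (fun i => Y i ω') = fun i => Y i ω) rfl)
      (prod_ne_zero_iff.2 fun i _ => div_ne_zero (hXY i) (hY i)),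
    log_prod fun i _ => div_ne_zero (hXY i) (hY i), neg_add, mul_add, ← sum_neg_distrib, mul_sum]
  congr 1
  refine sum_congr rfl fun i _ => ?_
  rw [log_div (hXY i) (hY i)]
  ring

theorem condEnt_pi_le_sum [Fintype β] [Fintype γ] [DecidableEq ι] (hp : ∀ ω, 0 ≤ p ω) :
    condEnt p (fun ω i => X i ω) (fun ω i => Y i ω) ≤ ∑ i, condEnt p (X i) (Y i) := by
  have hGibbs := ent_le_sum_mul_neg_log hp _ (condProductLaw_nonneg X Y hp)
    (sum_condProductLaw_le X Y hp) fun _ => condProductLaw_pos X Y hp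
  simp only [mul_neg_log_condProductLaw X Y hp, sum_add_distrib, sum_mul_neg_log_pr_eq_ent]
    at hGibbs
  rw [sum_comm] at hGibbs
  simp only [sum_sub_distrib, sum_mul_neg_log_pr_eq_ent] at hGibbs
  simp only [condEnt, sum_sub_distrib]
  linarith

end Subadditivity

lemma negMulLog_prod {ι : Type*} [DecidableEq ι] {s : Finset ι} (a : ι → ℝ) :
    negMulLog (∏ i ∈ s, a i) = ∑ i ∈ s, (∏ j ∈ s.erase i, a j) * negMulLog (a i) := by
  induction s using Finset.induction_on with
  | empty => simp
  | insert i s hi ih =>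
    rw [prod_insert hi, negMulLog_mul, sum_insert hi, ih, erase_insert hi, mul_sum]
    congr 1
    refine sum_congr rfl fun j hj => ?_
    have hji : i ≠ j := fun h => hi (h ▸ hj)
    rw [erase_insert_of_ne hji, prod_insert fun h => hi (mem_of_mem_erase h)]
    ring

section ProductSums

variable {ι γ : Type*} [Fintype ι] [DecidableEq ι] [Fintype γ]

lemma sum_pi_prod_eq_one {f : ι → γ → ℝ} (hf : ∀ i, ∑ y, f i y = 1) :
    ∑ x : ι → γ, ∏ i, f i (x i) = 1 := by
  rw [← Fintype.prod_sum f]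
  simp [hf]

lemma sum_pi_prod_erase_mul {f : ι → γ → ℝ} (hf : ∀ i, ∑ y, f i y = 1) (i : ι)
    (g : γ → ℝ) : ∑ x : ι → γ, (∏ j ∈ univ.erase i, f j (x j)) * g (x i) = ∑ y, g y := by
  have h : ∀ x : ι → γ, (∏ j ∈ univ.erase i, f j (x j)) * g (x i)
      = ∏ j, Function.update f i g j (x j) := fun x => by
    rw [← prod_erase_mul _ _ (mem_univ i), Function.update_self]
    congr 1
    exact prod_congr rfl fun j hj => by rw [Function.update_of_ne (ne_of_mem_erase hj)]
  rw [sum_congr rfl fun x _ => h x, ← Fintype.prod_sum, ← prod_erase_mul _ _ (mem_univ i),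
    prod_eq_one fun j hj => by rw [Function.update_of_ne (ne_of_mem_erase hj), hf],
    Function.update_self, one_mul]

lemma sum_pi_negMulLog_prod {f : ι → γ → ℝ} (hf : ∀ i, ∑ y, f i y = 1) :
    ∑ x : ι → γ, negMulLog (∏ i, f i (x i)) = ∑ i, ∑ y, negMulLog (f i y) := by
  simp only [negMulLog_prod]
  rw [sum_comm]
  exact sum_congr rfl fun i _ => sum_pi_prod_erase_mul hf i fun y => negMulLog (f i y)

lemma sum_pi_ite_prod {f : ι → γ → ℝ} (hf : ∀ i, ∑ y, f i y = 1) (i : ι) (y : γ) :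
    ∑ x : ι → γ, (if x i = y then ∏ j, f j (x j) else 0) = f i y := by
  have h : ∀ x : ι → γ, (if x i = y then ∏ j, f j (x j) else 0)
      = (∏ j ∈ univ.erase i, f j (x j)) * if x i = y then f i (x i) else 0 := fun x => by
    split_ifs <;> simp [prod_erase_mul _ _ (mem_univ i)]
  rw [sum_congr rfl fun x _ => h x, sum_pi_prod_erase_mul hf i fun z => if z = y then f i z else 0]
  simp

end ProductSums

def IsChannelOutput {Ω α β : Type*} [Fintype Ω] (p : Ω → ℝ) (k : α → β → ℝ) (X : Ω → α)
    (Y : Ω → β) : Prop :=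
  ∀ x y, pr p (fun ω => X ω = x ∧ Y ω = y) = pr p (fun ω => X ω = x) * k x y

section Channel

variable {Ω α β ι : Type*} [Fintype Ω] [Fintype β] [Fintype ι] [DecidableEq ι]
  {p : Ω → ℝ} {X : Ω → α} {Y : Ω → β} {k : α → β → ℝ}

lemma isChannelOutput_of_pr_eq_mul (hk : ∀ x, ∑ y, k x y = 1) {m : α → ℝ}
    (h : ∀ x y, pr p (fun ω => X ω = x ∧ Y ω = y) = m x * k x y) : IsChannelOutput p k X Y := by
  intro x y
  rw [h, ← sum_pr_and_eq (fun ω => X ω = x) Y]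
  simp only [h, ← mul_sum, hk, mul_one]

lemma IsChannelOutput.condEnt_eq [Fintype α] (hk : ∀ x, ∑ y, k x y = 1)
    (h : IsChannelOutput p k X Y) :
    condEnt p Y X = ∑ x, pr p (fun ω => X ω = x) * ∑ y, negMulLog (k x y) := by
  have hpair : ∀ y x, pr p (fun ω => (Y ω, X ω) = (y, x)) = pr p (fun ω => X ω = x) * k x y :=
    fun y x => (pr_congr fun ω => by rw [Prod.mk.injEq, and_comm]).trans (h x y)
  rw [condEnt, ent, Fintype.sum_prod_type, sum_comm, ent, ← sum_sub_distrib]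
  refine sum_congr rfl fun x _ => ?_
  simp only [hpair, negMulLog_mul, sum_add_distrib, ← sum_mul, hk, one_mul, mul_sum]
  ring

lemma IsChannelOutput.pi_coord [Fintype α] {X : ι → Ω → α} {Y : ι → Ω → β}
    (hk : ∀ x, ∑ y, k x y = 1)
    (h : IsChannelOutput p (fun x y => ∏ i, k (x i) (y i)) (fun ω i => X i ω) (fun ω i => Y i ω))
    (i : ι) : IsChannelOutput p k (X i) (Y i) := fun a b =>
  calc pr p (fun ω => X i ω = a ∧ Y i ω = b)
      = ∑ x : ι → α, ∑ y : ι → β, if x i = a ∧ y i = b then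
          pr p (fun ω => (fun j => X j ω) = x ∧ (fun j => Y j ω) = y) else 0 :=
        pr_eq_sum_sum_ite (fun ω j => X j ω) (fun ω j => Y j ω) fun x y => x i = a ∧ y i = b
    _ = ∑ x : ι → α, if x i = a then pr p (fun ω => (fun j => X j ω) = x) *
          ∑ y : ι → β, (if y i = b then ∏ j, k (x j) (y j) else 0) else 0 := by
        refine sum_congr rfl fun x _ => ?_
        split_ifs with hx
        · simp only [hx, true_and, h x, mul_ite, mul_zero, mul_sum]
        · simp [hx]
    _ = (∑ x : ι → α, if x i = a then pr p (fun ω => (fun j => X j ω) = x) else 0) * k a b := by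
        rw [sum_mul]
        refine sum_congr rfl fun x _ => ?_
        split_ifs with hx
        · rw [sum_pi_ite_prod (f := fun j z => k (x j) z) (fun j => hk (x j)), hx]
        · rw [zero_mul]
    _ = pr p (fun ω => X i ω = a) * k a b :=
        congrArg (· * k a b) (pr_eq_sum_ite (fun ω j => X j ω) fun x => x i = a).symm

lemma IsChannelOutput.condEnt_pi_eq_sum [Fintype α] {X : ι → Ω → α} {Y : ι → Ω → β}
    (hk : ∀ x, ∑ y, k x y = 1)
    (h : IsChannelOutput p (fun x y => ∏ i, k (x i) (y i)) (fun ω i => X i ω) (fun ω i => Y i ω)) :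
    condEnt p (fun ω i => Y i ω) (fun ω i => X i ω) = ∑ i, condEnt p (Y i) (X i) := by
  rw [h.condEnt_eq fun x => sum_pi_prod_eq_one fun i => hk (x i)]
  simp only [sum_pi_negMulLog_prod fun i => hk _]
  rw [sum_congr rfl fun x _ => mul_sum _ _ _, sum_comm]
  refine sum_congr rfl fun i _ => ?_
  rw [(h.pi_coord hk i).condEnt_eq hk,
    sum_pr_mul (fun ω j => X j ω) fun x => ∑ y, negMulLog (k (x i) y),
    sum_pr_mul (X i) fun a => ∑ y, negMulLog (k a y)]

end Channel

theorem stmt5_general {Ω 𝒜 ℬ 𝒞 : Type*} [Fintype Ω] [Fintype 𝒜] [Fintype ℬ] [Fintype 𝒞]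
    (T : ℕ) (p : Ω → ℝ) (hp : IsPMF p)
    (A : Fin T → Ω → 𝒜) (B : Fin T → Ω → ℬ) (C : Fin T → Ω → 𝒞)
    (q : 𝒜 → ℬ → ℝ) (r : ℬ → 𝒞 → ℝ)
    (hr1 : ∀ b, ∑ c, r b c = 1)
    (hmem : ∀ (a : Fin T → 𝒜) (b : Fin T → ℬ) (c : Fin T → 𝒞),
      pr p (fun ω => (∀ τ, A τ ω = a τ) ∧ (∀ τ, B τ ω = b τ) ∧ (∀ τ, C τ ω = c τ))
        = pr p (fun ω => ∀ τ, A τ ω = a τ) * ∏ τ, (q (a τ) (b τ) * r (b τ) (c τ))) :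
    ent p (fun ω (τ : Fin T) => B τ ω) - ent p (fun ω (τ : Fin T) => C τ ω)
      ≤ ∑ τ, (ent p (B τ) - ent p (C τ)) := by
  have hchannel : IsChannelOutput p (fun b c => ∏ τ, r (b τ) (c τ))
      (fun ω τ => B τ ω) (fun ω τ => C τ ω) := by
    refine isChannelOutput_of_pr_eq_mul (fun b => sum_pi_prod_eq_one fun τ => hr1 (b τ))
      (m := fun b => ∑ a : Fin T → 𝒜, pr p (fun ω => ∀ τ, A τ ω = a τ) * ∏ τ, q (a τ) (b τ))
      fun b c => ?_
    rw [← sum_pr_and_eq _ fun ω τ => A τ ω, sum_mul]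
    refine sum_congr rfl fun a _ => ?_
    rw [pr_congr (F := fun ω => (∀ τ, A τ ω = a τ) ∧ (∀ τ, B τ ω = b τ) ∧ ∀ τ, C τ ω = c τ)
      fun ω => by simp only [funext_iff]; exact and_comm, hmem, prod_mul_distrib, mul_assoc]
  calc ent p (fun ω τ => B τ ω) - ent p (fun ω τ => C τ ω)
      = condEnt p (fun ω τ => B τ ω) (fun ω τ => C τ ω)
        - condEnt p (fun ω τ => C τ ω) (fun ω τ => B τ ω) := ent_sub_ent_eq_condEnt_sub_condEnt _ _
    _ ≤ ∑ τ, condEnt p (B τ) (C τ) - ∑ τ, condEnt p (C τ) (B τ) := by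
        rw [hchannel.condEnt_pi_eq_sum hr1]
        exact sub_le_sub_right (condEnt_pi_le_sum B C hp.1) _
    _ = ∑ τ, (ent p (B τ) - ent p (C τ)) := by
        simp only [ent_sub_ent_eq_condEnt_sub_condEnt, sum_sub_distrib]

theorem stmt5 {Ω 𝒜 ℬ 𝒞 : Type*} [Fintype Ω] [Fintype 𝒜] [Fintype ℬ] [Fintype 𝒞]
    (T : ℕ) (p : Ω → ℝ) (hp : IsPMF p)
    (A : Fin T → Ω → 𝒜) (B : Fin T → Ω → ℬ) (C : Fin T → Ω → 𝒞)
    (q : 𝒜 → ℬ → ℝ) (r : ℬ → 𝒞 → ℝ)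
    (hq0 : ∀ a b, 0 ≤ q a b) (hq1 : ∀ a, ∑ b, q a b = 1)
    (hr0 : ∀ b c, 0 ≤ r b c) (hr1 : ∀ b, ∑ c, r b c = 1)
    (hmem : ∀ (a : Fin T → 𝒜) (b : Fin T → ℬ) (c : Fin T → 𝒞),
      pr p (fun ω => (∀ τ, A τ ω = a τ) ∧ (∀ τ, B τ ω = b τ) ∧ (∀ τ, C τ ω = c τ))
        = pr p (fun ω => ∀ τ, A τ ω = a τ) * ∏ τ, (q (a τ) (b τ) * r (b τ) (c τ))) :
    ent p (fun ω (τ : Fin T) => B τ ω) - ent p (fun ω (τ : Fin T) => C τ ω)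
      ≤ ∑ τ, (ent p (B τ) - ent p (C τ)) :=
  stmt5_general T p hp A B C q r hr1 hmem
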